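/- Let F, G : A → B be functors and ⟨F|G⟩ the inserter category with forgetful functor P and canonical transformation ψ : FP → GP. Every morphism g in ⟨F|G⟩ such that G(P g) is a monomorphism is cartesian with respect to P over P g. -/

import Mathlib

open CategoryTheory

universe v₁ v₂ v₃ u₁ u₂ u₃

variable {A : Type u₁} {B : Type u₂} [Category.{v₁} A] [Category.{v₂} B]

/-- The inserter category `⟨F|G⟩` of two functors `F G : A ⥤ B`: objects are pairs
`(A, α : F A ⟶ G A)`. -/
structure Inserter (F G : A ⥤ B) where
  obj : A
  hom : F.obj obj ⟶ G.obj obj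

namespace Inserter

variable {F G : A ⥤ B}

instance : Category (Inserter F G) where
  Hom X Y := { u : X.obj ⟶ Y.obj // X.hom ≫ G.map u = F.map u ≫ Y.hom }
  id X := ⟨𝟙 X.obj, by simp⟩
  comp {X Y Z} u v := ⟨u.1 ≫ v.1, by
    rw [F.map_comp, G.map_comp, ← Category.assoc, u.2, Category.assoc, v.2, ← Category.assoc]⟩
  id_comp u := Subtype.ext (Category.id_comp u.1)
  comp_id u := Subtype.ext (Category.comp_id u.1)
  assoc u v w := Subtype.ext (Category.assoc u.1 v.1 w.1)

/-- The forgetful functor `P : ⟨F|G⟩ ⥤ A`. -/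
def P (F G : A ⥤ B) : Inserter F G ⥤ A where
  obj X := X.obj
  map u := u.1
  map_id _ := rfl
  map_comp _ _ := rfl

end Inserter

/-- A morphism `f` of `A` is cartesian with respect to `F` over `F.map f`. -/
def IsCartesian {A' : Type u₃} [Category.{v₃} A'] (F : A' ⥤ A) {X Y : A'} (f : X ⟶ Y) : Prop :=
  ∀ ⦃Z : A'⦄ (g : Z ⟶ Y) (h : F.obj Z ⟶ F.obj X),
    h ≫ F.map f = F.map g → ∃! k : Z ⟶ X, F.map k = h ∧ k ≫ f = g

theorem IsCartesian.of_faithful {A' : Type u₃} [Category.{v₃} A'] (F : A' ⥤ A) [F.Faithful]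
    {X Y : A'} (f : X ⟶ Y)
    (hlift : ∀ ⦃Z : A'⦄ (g : Z ⟶ Y) (h : F.obj Z ⟶ F.obj X),
      h ≫ F.map f = F.map g → ∃ k : Z ⟶ X, F.map k = h) :
    IsCartesian F f := by
  intro Z g h hh
  obtain ⟨k, rfl⟩ := hlift g h hh
  exact ⟨k, ⟨rfl, F.map_injective (by simpa using hh)⟩, fun k' hk' => F.map_injective hk'.1⟩

namespace Inserter

variable {F G : A ⥤ B}

theorem hom_ext {X Y : Inserter F G} {u v : X ⟶ Y} (h : (P F G).map u = (P F G).map v) : u = v :=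
  Subtype.ext h

instance : (P F G).Faithful where
  map_injective := hom_ext

/-- After composing with the monomorphism `G.map g.1`, the square for `u` becomes the
square of `g'`. -/
theorem hom_condition_of_comp_eq {X Y Z : Inserter F G} (g : X ⟶ Y) [Mono (G.map g.1)]
    (g' : Z ⟶ Y) (u : Z.obj ⟶ X.obj) (hu : u ≫ g.1 = g'.1) :
    Z.hom ≫ G.map u = F.map u ≫ X.hom := by
  rw [← cancel_mono (G.map g.1)]
  calc (Z.hom ≫ G.map u) ≫ G.map g.1 = Z.hom ≫ G.map g'.1 := by
        rw [Category.assoc, ← G.map_comp, hu]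
    _ = F.map g'.1 ≫ Y.hom := g'.2
    _ = (F.map u ≫ X.hom) ≫ G.map g.1 := by
        rw [Category.assoc, g.2, ← Category.assoc, ← F.map_comp, hu]

end Inserter

/-- Every morphism `g` of the inserter category `⟨F|G⟩` such that `G (P g)` is a monomorphism
is cartesian with respect to the forgetful functor `P` over `P g`. -/
theorem inserter_mono_isCartesian {F G : A ⥤ B} {X Y : Inserter F G}
    (g : X ⟶ Y) (hmono : Mono (G.map g.1)) :
    IsCartesian (Inserter.P F G) g :=
  IsCartesian.of_faithful _ g fun _ g' u hu =>
    ⟨⟨u, Inserter.hom_condition_of_comp_eq g g' u hu⟩, rfl⟩
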